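/- Let D ⊂ ℝ₊^d be compact and suppose there exist β ∈ (0,1), ε ∈ (0,1/3), finitely many open balls B_j covering D, and vectors v^{(j)} ∈ ℝ^d with ‖v^{(j)}‖₁ ≤ 1, such that for every j, every x ∈ D ∩ B_j^ε (the ε-neighborhood of B_j) and every 0 ≤ s ≤ ε/β, one has min_{x̃ ∈ ℝ^d \ D} ‖x + s·v^{(j)} − x̃‖_∞ ≥ β·s. Suppose also the conic hull of {c^r}_{r∈R} equals ℝ^d. Then there exist κ ≥ 1, ε₀ > 0 and a function C : (0,∞) → ℝ₊ with C(t) → 0 as t → 0, such that for any x, y ∈ D with ‖x − y‖₁ < ε₀, setting t := κ‖x − y‖₁, there exists an absolutely continuous path z : [0,t] → D with z(0) = x, z(t) = y and I_{x,t}(z) ≤ C(t). -/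

import Mathlib

open Real Filter Finset Set MeasureTheory
open scoped Classical

noncomputable section

/-- A chemical reaction network on `d` species with `m` reactions. -/
structure CRN (d m : ℕ) where
  cin : Fin m → Fin d → ℕ
  cout : Fin m → Fin d → ℕ
  k : Fin m → ℝ
  k_pos : ∀ r, 0 < k r

namespace CRN

variable {d m : ℕ}

/-- The reaction vector `c^r = c_out^r - c_in^r`. -/
def cvec (N : CRN d m) (r : Fin m) : Fin d → ℝ := fun i => (N.cout r i : ℝ) - (N.cin r i : ℝ)

/-- Mass-action rate `λ_r`. -/
def lam (N : CRN d m) (r : Fin m) (x : Fin d → ℝ) : ℝ := N.k r * ∏ i, x i ^ (N.cin r i)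

/-- Volume-normalized jump rate `Λ_r^{(v)}`. -/
def jump (N : CRN d m) (v : ℝ) (r : Fin m) (x : Fin d → ℝ) : ℝ :=
  N.k r / v ^ (∑ i, N.cin r i) * ∏ i, ∏ l ∈ Finset.range (N.cin r i), (v * x i - (l : ℝ))

/-- Reactions whose input complex is `w`-maximal among all input complexes. -/
def Rw (N : CRN d m) (w : Fin d → ℝ) : Set (Fin m) :=
  {r | ∀ r', 0 ≤ ∑ i, w i * ((N.cin r i : ℝ) - (N.cin r' i : ℝ))}

/-- Strongly endotactic network. -/
def StronglyEndotactic (N : CRN d m) : Prop :=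
  ∀ w : Fin d → ℝ, w ≠ 0 →
    (∃ r ∈ N.Rw w, ∑ i, w i * N.cvec r i < 0) ∧
    ∀ r ∈ N.Rw w, ∑ i, w i * N.cvec r i ≤ 0

/-- A siphon. -/
def IsSiphon (N : CRN d m) (P : Finset (Fin d)) : Prop :=
  P.Nonempty ∧ ∀ r, (∃ i ∈ P, 0 < N.cout r i) → ∃ i ∈ P, 0 < N.cin r i

/-- Reactions with substrates only from `P`. -/
def RP (N : CRN d m) (P : Finset (Fin d)) : Set (Fin m) := {r | ∀ i ∉ P, N.cin r i = 0}

/-- Reactions of `R(P)` whose input complex is `w`-maximal within `R(P)`. -/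
def RPw (N : CRN d m) (P : Finset (Fin d)) (w : Fin d → ℝ) : Set (Fin m) :=
  {r | r ∈ N.RP P ∧ ∀ r' ∈ N.RP P, 0 ≤ ∑ i, w i * ((N.cin r i : ℝ) - (N.cin r' i : ℝ))}

/-- The products of reaction `r` lie in `P`. -/
def OutIn (N : CRN d m) (P : Finset (Fin d)) (r : Fin m) : Prop := ∀ i ∉ P, N.cout r i = 0

/-- `w`-dissipative reaction. -/
def Dissipative (N : CRN d m) (P : Finset (Fin d)) (w : Fin d → ℝ) (r : Fin m) : Prop :=
  ¬ N.OutIn P r ∨ ∑ i, w i * N.cvec r i < 0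

/-- `w`-explosive reaction. -/
def Explosive (N : CRN d m) (P : Finset (Fin d)) (w : Fin d → ℝ) (r : Fin m) : Prop :=
  N.OutIn P r ∧ 0 < ∑ i, w i * N.cvec r i

end CRN

/-- Chemical Lyapunov function `U(x) = d + 1 + ∑ x_i (log x_i - 1)`. -/
def U (n : ℕ) (x : Fin n → ℝ) : ℝ := n + 1 + ∑ i, x i * (Real.log (x i) - 1)

/-- Euclidean inner product. -/
def dot {n : ℕ} (a b : Fin n → ℝ) : ℝ := ∑ i, a i * b i

namespace CRN

variable {d m : ℕ}

/-- `h_r^{(v)}(x) = ⟨∇_r^{(v)} U(x), c^r⟩`. -/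
def hrv (N : CRN d m) (P : Finset (Fin d)) (v : ℝ) (r : Fin m) (x : Fin d → ℝ) : ℝ :=
  ∑ i, (if i ∈ P then Real.log (x i)
        else if N.cout r i ≠ 0 then Real.log (N.cvec r i / v) else 0) * N.cvec r i

/-- `Q_r^{(v)}(x) = (U(x + v⁻¹ c^r)/U(x))^v`. -/
def Qrv (N : CRN d m) (v : ℝ) (r : Fin m) (x : Fin d → ℝ) : ℝ :=
  (U d (fun i => x i + N.cvec r i / v) / U d x) ^ v

/-- `L_r^{(v)}(x) = U(x) (Q_r^{(v)}(x) - 1)`. -/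
def Lrv (N : CRN d m) (v : ℝ) (r : Fin m) (x : Fin d → ℝ) : ℝ :=
  U d x * (N.Qrv v r x - 1)

/-- The modified network `C_{u,P}`: outputs of reactions not in `R(P)_u` are restricted to `P`. -/
def modify (N : CRN d m) (P : Finset (Fin d)) (u : Fin d → ℝ) : CRN d m where
  cin := N.cin
  cout := fun r i => if i ∈ P ∨ r ∈ N.RPw P u then N.cout r i else 0
  k := N.k
  k_pos := N.k_pos

/-- The nested sets `super_k` of a frame. -/
def superN (N : CRN d m) (P : Finset (Fin d)) {L : ℕ} (wbar : Fin L → Fin d → ℝ) : ℕ → Set (Fin m)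
  | 0 => N.RP P
  | (k+1) =>
    if h : k < L then
      {r | r ∈ N.superN P wbar k ∧ ∀ r' ∈ N.superN P wbar k,
        0 ≤ ∑ i, wbar ⟨k, h⟩ i * ((N.cin r i : ℝ) - (N.cin r' i : ℝ))}
    else N.superN P wbar k

/-- Species reachable in `k` steps starting from reactions with no inputs. -/
def reachSet (N : CRN d m) : ℕ → Set (Fin d)
  | 0 => ∅
  | (k+1) => N.reachSet k ∪
      {i | ∃ r, 0 < N.cout r i ∧ ∀ l, 0 < N.cin r l → l ∈ N.reachSet k}

/-- The Lagrangian `L(λ, ξ)`. -/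
def Lagr (N : CRN d m) (lamv : Fin m → ℝ) (ξ : Fin d → ℝ) : ℝ :=
  ⨆ θ : Fin d → ℝ, ((∑ i, θ i * ξ i) - ∑ r, lamv r * (Real.exp (∑ i, θ i * N.cvec r i) - 1))

end CRN

/-- A frame: an ordered orthonormal family supported on `P`. -/
structure Frame (d : ℕ) (P : Finset (Fin d)) (dstar : ℕ) where
  w : Fin dstar → Fin d → ℝ
  ortho : ∀ k l, dot (w k) (w l) = if k = l then 1 else 0
  suppP : ∀ k, ∀ i ∉ P, w k i = 0

/-- A `(v',P)`-divergent volume-jet framed by `F` and adapted to the network `N`. -/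
structure VolJet {d m : ℕ} (N : CRN d m) (P : Finset (Fin d)) {dstar : ℕ}
    (F : Frame d P dstar) (v' : ℝ → ℝ) where
  v : ℕ → ℝ
  θ : ℕ → ℝ
  w : ℕ → Fin d → ℝ
  θ_gt : ∀ j, 1 < θ j
  θ_top : Tendsto θ atTop atTop
  conic : ∀ j, ∃ a : Fin dstar → ℝ, (∀ k, 0 ≤ a k) ∧ ∀ i, w j i = ∑ k, a k * F.w k i
  unit : ∀ j, dot (w j) (w j) = 1
  beta_ratio : ∀ (k : ℕ) (hk : k + 1 < dstar),
    Tendsto (fun j => dot (w j) (F.w ⟨k + 1, hk⟩) / dot (w j) (F.w ⟨k, Nat.lt_of_succ_lt hk⟩))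
      atTop (nhds 0)
  adapted_sign : ∀ r ∈ N.RP P, N.OutIn P r →
    (∀ j, dot (w j) (N.cvec r) < 0) ∨ (∀ j, dot (w j) (N.cvec r) = 0) ∨
      (∀ j, 0 < dot (w j) (N.cvec r))
  adapted_theta : ∀ k : Fin dstar,
    (∃ L : ℝ, Tendsto (fun j => θ j ^ dot (w j) (F.w k)) atTop (nhds L)) ∨
      Tendsto (fun j => θ j ^ dot (w j) (F.w k)) atTop atTop
  vx_nat : ∀ j, ∀ i ∈ P, ∃ n : ℕ, 0 < n ∧ v j * θ j ^ (w j i) = n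
  v_big : ∀ j, v' (∑ i ∈ P, θ j ^ (w j i)) < v j
  x_div : Tendsto (fun j => ∑ i ∈ P, θ j ^ (w j i)) atTop atTop

/-- The spatial trajectory of a volume-jet. -/
def VolJet.x {d m : ℕ} {N : CRN d m} {P : Finset (Fin d)} {dstar : ℕ} {F : Frame d P dstar}
    {v' : ℝ → ℝ} (J : VolJet N P F v') (j : ℕ) : Fin d → ℝ :=
  fun i => if i ∈ P then J.θ j ^ (J.w j i) else 0

/-- Reachability sets for a polynomial system. -/
def polyReach (d : ℕ) (Q : Fin d → MvPolynomial (Fin d) ℝ) : ℕ → Set (Fin d)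
  | 0 => ∅
  | (k+1) => polyReach d Q k ∪
      {i | ∃ s : Fin d →₀ ℕ, 0 < MvPolynomial.coeff s (Q i) ∧ ∀ l, s l ≠ 0 → l ∈ polyReach d Q k}

/-!
Go from `x` along `v` for time `a = 2δ/β`, where `δ = ‖x - y‖₁`: this buys clearance `β a = 2δ`
from the complement of `D`. Then translate by `y - x` in time `δ`, which keeps every coordinate
at least `δ`, and finally come back along `-v` to `y`. On the whole path of length
`t = (4/β + 1) δ` the coordinates are at least `min(s, t - s) / (4/β + 1)`, so every rate `λ_r` is
bounded below by a power of that quantity. Since the reaction vectors positively span `ℝ^d`, every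
velocity of `ℓ¹`-norm at most one is a combination `∑ q_r c^r` with bounded `q_r ≥ 0`, and
`q u - λ (e^u - 1) ≤ λ + q (log q - log λ)` then bounds the Lagrangian by
`A + B |log min(s, t - s)|`, whose integral over `[0, t]` tends to `0` with `t`.
-/

open Topology

theorem mul_sub_mul_exp_sub_one_le {q l : ℝ} (hq : 0 ≤ q) (hl : 0 < l) (u : ℝ) :
    q * u - l * (exp u - 1) ≤ l + q * (log q - log l) := by
  rcases hq.eq_or_lt with rfl | hq
  · nlinarith [exp_pos u]
  · have h := mul_le_mul_of_nonneg_left (add_one_le_exp (u - (log q - log l))) hq.le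
    have he : q * exp (u - (log q - log l)) = l * exp u := by
      rw [exp_sub, exp_sub, exp_log hq, exp_log hl]
      field_simp
    nlinarith

theorem mul_log_sub_log_le {q Q ℓ l : ℝ} (hq : 0 ≤ q) (hqQ : q ≤ Q) (hℓ : 0 < ℓ) (hℓl : ℓ ≤ l) :
    q * (log q - log l) ≤ Q * |log Q - log ℓ| := by
  rcases hq.eq_or_lt with rfl | hq
  · simpa using mul_nonneg hqQ (abs_nonneg (log Q - log ℓ))
  calc q * (log q - log l) ≤ q * |log Q - log ℓ| :=
        mul_le_mul_of_nonneg_left ((sub_le_sub (log_le_log hq hqQ) (log_le_log hℓ hℓl)).trans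
          (le_abs_self _)) hq.le
    _ ≤ Q * |log Q - log ℓ| := mul_le_mul_of_nonneg_right hqQ (abs_nonneg _)

theorem abs_log_mul_le (a b : ℝ) : |log (a * b)| ≤ |log a| + |log b| := by
  rcases eq_or_ne a 0 with rfl | ha
  · simp
  rcases eq_or_ne b 0 with rfl | hb
  · simp
  rw [log_mul ha hb]
  exact abs_add_le _ _

theorem abs_log_min_le (a b : ℝ) : |log (min a b)| ≤ |log a| + |log b| := by
  rcases min_choice a b with h | h <;> rw [h] <;> simp

theorem intervalIntegrable_abs_log (a b : ℝ) :
    IntervalIntegrable (fun u => |log u|) volume a b :=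
  intervalIntegral.intervalIntegrable_log'.abs

def logCost (A B c τ : ℝ) : ℝ := (A + B * |log c|) * τ + 2 * B * ∫ u in (0:ℝ)..τ, |log u|

theorem tendsto_logCost (A B c : ℝ) : Tendsto (logCost A B c) (𝓝[>] 0) (𝓝 0) := by
  have hcont : Continuous (logCost A B c) :=
    (continuous_const.mul continuous_id).add (continuous_const.mul
      (intervalIntegral.continuous_primitive intervalIntegrable_abs_log 0))
  simpa [logCost] using (hcont.tendsto 0).mono_left nhdsWithin_le_nhds

theorem intervalIntegrable_and_integral_le_logCost {F : ℝ → ℝ} {A B c t : ℝ} (ht : 0 ≤ t)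
    (hB : 0 ≤ B) (hF : AEStronglyMeasurable F (volume.restrict (Ioo 0 t)))
    (hF0 : ∀ s ∈ Ioo 0 t, 0 ≤ F s)
    (hFle : ∀ s ∈ Ioo 0 t, F s ≤ A + B * |log (c * min s (t - s))|) :
    IntervalIntegrable F volume 0 t ∧ ∫ s in (0:ℝ)..t, F s ≤ logCost A B c t := by
  set G : ℝ → ℝ := fun s => (A + B * |log c|) + B * |log s| + B * |log (t - s)|
  have hG : IntervalIntegrable G volume 0 t :=
    (intervalIntegrable_const.add ((intervalIntegrable_abs_log 0 t).const_mul B)).add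
      (by simpa using ((intervalIntegrable_abs_log t 0).comp_sub_left t).const_mul B)
  have hFG : ∀ s ∈ Ioo 0 t, F s ≤ G s := fun s hs => by
    have := (abs_log_mul_le c _).trans (add_le_add_right (abs_log_min_le s (t - s)) _)
    nlinarith [hFle s hs]
  have hFint : IntervalIntegrable F volume 0 t := by
    rw [intervalIntegrable_iff_integrableOn_Ioo_of_le ht] at hG ⊢
    refine hG.mono' hF
      ((ae_restrict_iff' measurableSet_Ioo).2 (Eventually.of_forall fun s hs => ?_))
    rw [Real.norm_eq_abs, abs_of_nonneg (hF0 s hs)]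
    exact hFG s hs
  refine ⟨hFint, (intervalIntegral.integral_mono_ae_restrict ht hFint hG ?_).trans_eq ?_⟩
  · exact (ae_restrict_congr_set Ioo_ae_eq_Icc).1
      ((ae_restrict_iff' measurableSet_Ioo).2 (Eventually.of_forall hFG))
  · have hsymm : ∫ s in (0:ℝ)..t, |log (t - s)| = ∫ s in (0:ℝ)..t, |log s| := by
      simpa using intervalIntegral.integral_comp_sub_left (a := 0) (b := t) (fun s => |log s|) t
    simp only [G]
    rw [intervalIntegral.integral_add (intervalIntegrable_const.add
        ((intervalIntegrable_abs_log 0 t).const_mul B))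
        (by simpa using ((intervalIntegrable_abs_log t 0).comp_sub_left t).const_mul B),
      intervalIntegral.integral_add intervalIntegrable_const
        ((intervalIntegrable_abs_log 0 t).const_mul B),
      intervalIntegral.integral_const, intervalIntegral.integral_const_mul,
      intervalIntegral.integral_const_mul, hsymm, logCost]
    simp only [smul_eq_mul, sub_zero]
    ring

namespace CRN

variable {d m : ℕ} (N : CRN d m)

def PositivelySpans : Prop :=
  ∀ ξ : Fin d → ℝ, ∃ q : Fin m → ℝ, (∀ r, 0 ≤ q r) ∧ ∀ i, ∑ r, q r * N.cvec r i = ξ i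

def lagrObjective (lamv : Fin m → ℝ) (ξ θ : Fin d → ℝ) : ℝ :=
  (∑ i, θ i * ξ i) - ∑ r, lamv r * (exp (∑ i, θ i * N.cvec r i) - 1)

theorem Lagr_eq_iSup (lamv : Fin m → ℝ) (ξ : Fin d → ℝ) :
    N.Lagr lamv ξ = ⨆ θ, N.lagrObjective lamv ξ θ := rfl

section Representation

variable {lamv : Fin m → ℝ} {ξ : Fin d → ℝ} {q : Fin m → ℝ}

theorem lagrObjective_le (hl : ∀ r, 0 < lamv r) (hq : ∀ r, 0 ≤ q r)
    (hrep : ∀ i, ∑ r, q r * N.cvec r i = ξ i) (θ : Fin d → ℝ) :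
    N.lagrObjective lamv ξ θ ≤ ∑ r, (lamv r + q r * (log (q r) - log (lamv r))) := by
  have hpair : ∑ i, θ i * ξ i = ∑ r, q r * ∑ i, θ i * N.cvec r i := by
    simp_rw [← hrep, Finset.mul_sum]
    rw [Finset.sum_comm]
    exact Finset.sum_congr rfl fun r _ => Finset.sum_congr rfl fun i _ => by ring
  rw [lagrObjective, hpair, ← Finset.sum_sub_distrib]
  exact Finset.sum_le_sum fun r _ => mul_sub_mul_exp_sub_one_le (hq r) (hl r) _

theorem bddAbove_lagrObjective (hl : ∀ r, 0 < lamv r) (hq : ∀ r, 0 ≤ q r)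
    (hrep : ∀ i, ∑ r, q r * N.cvec r i = ξ i) : BddAbove (range (N.lagrObjective lamv ξ)) :=
  ⟨_, forall_mem_range.2 (N.lagrObjective_le hl hq hrep)⟩

theorem Lagr_le (hl : ∀ r, 0 < lamv r) (hq : ∀ r, 0 ≤ q r)
    (hrep : ∀ i, ∑ r, q r * N.cvec r i = ξ i) :
    N.Lagr lamv ξ ≤ ∑ r, (lamv r + q r * (log (q r) - log (lamv r))) :=
  ciSup_le (N.lagrObjective_le hl hq hrep)

end Representation

theorem Lagr_nonneg (lamv : Fin m → ℝ) (ξ : Fin d → ℝ) : 0 ≤ N.Lagr lamv ξ := by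
  by_cases hb : BddAbove (range (N.lagrObjective lamv ξ))
  · exact (le_ciSup hb 0).trans' (by simp [lagrObjective])
  · rw [Lagr_eq_iSup, Real.iSup_of_not_bddAbove hb]

theorem exists_bounded_repr (hcone : N.PositivelySpans) :
    ∃ Q, 0 ≤ Q ∧ ∀ ξ : Fin d → ℝ, ∑ i, |ξ i| ≤ 1 → ∃ q : Fin m → ℝ,
      (∀ r, 0 ≤ q r ∧ q r ≤ Q) ∧ ∀ i, ∑ r, q r * N.cvec r i = ξ i := by
  choose qp hqp0 hqp using fun i => hcone (Pi.single i 1)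
  choose qm hqm0 hqm using fun i => hcone (-Pi.single i 1)
  have hpm : ∀ i r, 0 ≤ qp i r + qm i r := fun i r => add_nonneg (hqp0 i r) (hqm0 i r)
  refine ⟨∑ r, ∑ i, (qp i r + qm i r),
    Finset.sum_nonneg fun r _ => Finset.sum_nonneg fun i _ => hpm i r, fun ξ hξ => ?_⟩
  have hparts : ∀ i, (ξ i)⁺ ≤ 1 ∧ (ξ i)⁻ ≤ 1 := fun i => by
    have h1 := (Finset.single_le_sum (fun i _ => abs_nonneg (ξ i)) (Finset.mem_univ i)).trans hξ
    have h2 := posPart_add_negPart (ξ i)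
    constructor <;> linarith [posPart_nonneg (ξ i), negPart_nonneg (ξ i)]
  refine ⟨fun r => ∑ i, ((ξ i)⁺ * qp i r + (ξ i)⁻ * qm i r), fun r => ⟨?_, ?_⟩, fun l => ?_⟩
  · exact Finset.sum_nonneg fun i _ =>
      add_nonneg (mul_nonneg (posPart_nonneg _) (hqp0 i r))
        (mul_nonneg (negPart_nonneg _) (hqm0 i r))
  · calc ∑ i, ((ξ i)⁺ * qp i r + (ξ i)⁻ * qm i r) ≤ ∑ i, (qp i r + qm i r) := by
          refine Finset.sum_le_sum fun i _ => add_le_add ?_ ?_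
          · exact mul_le_of_le_one_left (hqp0 i r) (hparts i).1
          · exact mul_le_of_le_one_left (hqm0 i r) (hparts i).2
      _ ≤ ∑ r, ∑ i, (qp i r + qm i r) :=
          Finset.single_le_sum (f := fun r => ∑ i, (qp i r + qm i r))
            (fun r _ => Finset.sum_nonneg fun i _ => hpm i r) (Finset.mem_univ r)
  · calc ∑ r, (∑ i, ((ξ i)⁺ * qp i r + (ξ i)⁻ * qm i r)) * N.cvec r l
        = ∑ i, ((ξ i)⁺ * ∑ r, qp i r * N.cvec r l + (ξ i)⁻ * ∑ r, qm i r * N.cvec r l) := by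
          simp only [Finset.sum_mul, Finset.mul_sum, ← Finset.sum_add_distrib]
          rw [Finset.sum_comm]
          exact Finset.sum_congr rfl fun i _ => Finset.sum_congr rfl fun r _ => by ring
      _ = ξ l := by
          simp [hqp, hqm, Pi.single_apply, ← sub_eq_add_neg]

theorem continuous_lam (r : Fin m) : Continuous (N.lam r) := by
  unfold lam
  fun_prop

theorem le_lam (r : Fin m) {x : Fin d → ℝ} {φ : ℝ} (hφ : 0 ≤ φ) (hx : ∀ i, φ ≤ x i) :
    N.k r * φ ^ (∑ i, N.cin r i) ≤ N.lam r x := by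
  rw [lam, ← Finset.prod_pow_eq_pow_sum]
  exact mul_le_mul_of_nonneg_left (Finset.prod_le_prod (fun i _ => pow_nonneg hφ _)
    fun i _ => pow_le_pow_left₀ hφ (hx i) _) (N.k_pos r).le

theorem lam_le (r : Fin m) {x : Fin d → ℝ} {X : ℝ} (hx0 : ∀ i, 0 ≤ x i) (hx : ∀ i, x i ≤ X) :
    N.lam r x ≤ N.k r * X ^ (∑ i, N.cin r i) := by
  rw [lam, ← Finset.prod_pow_eq_pow_sum]
  exact mul_le_mul_of_nonneg_left (Finset.prod_le_prod (fun i _ => pow_nonneg (hx0 i) _)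
    fun i _ => pow_le_pow_left₀ (hx0 i) (hx i) _) (N.k_pos r).le

theorem lam_pos (r : Fin m) {x : Fin d → ℝ} {φ : ℝ} (hφ : 0 < φ) (hx : ∀ i, φ ≤ x i) :
    0 < N.lam r x :=
  (mul_pos (N.k_pos r) (pow_pos hφ _)).trans_le (N.le_lam r hφ.le hx)

theorem exists_Lagr_lam_le_abs_log (hcone : N.PositivelySpans) (X : ℝ) :
    ∃ A B, 0 ≤ B ∧ ∀ (x ξ : Fin d → ℝ) (φ : ℝ), 0 < φ → (∀ i, φ ≤ x i) → ‖x‖ ≤ X →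
      ∑ i, |ξ i| ≤ 1 → N.Lagr (fun r => N.lam r x) ξ ≤ A + B * |log φ| := by
  obtain ⟨Q, hQ0, hQ⟩ := N.exists_bounded_repr hcone
  refine ⟨∑ r, (N.k r * X ^ (∑ i, N.cin r i) + Q * |log Q - log (N.k r)|),
    Q * ∑ r, ((∑ i, N.cin r i : ℕ) : ℝ), by positivity, fun x ξ φ hφ hφx hxX hξ => ?_⟩
  obtain ⟨q, hq, hrep⟩ := hQ ξ hξ
  have hterm : ∀ r, N.lam r x + q r * (log (q r) - log (N.lam r x)) ≤
      N.k r * X ^ (∑ i, N.cin r i) + Q * |log Q - log (N.k r)|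
        + Q * ((∑ i, N.cin r i : ℕ) : ℝ) * |log φ| := by
    intro r
    have hlog : |log Q - log (N.k r * φ ^ (∑ i, N.cin r i))|
        ≤ |log Q - log (N.k r)| + ((∑ i, N.cin r i : ℕ) : ℝ) * |log φ| := by
      rw [log_mul (N.k_pos r).ne' (pow_pos hφ _).ne', log_pow, sub_add_eq_sub_sub]
      refine (abs_sub _ _).trans_eq ?_
      rw [abs_mul, Nat.abs_cast]
    have hq' := mul_log_sub_log_le (hq r).1 (hq r).2 (mul_pos (N.k_pos r) (pow_pos hφ _))
      (N.le_lam r hφ.le hφx)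
    have := mul_le_mul_of_nonneg_left hlog hQ0
    linarith [N.lam_le r (fun i => hφ.le.trans (hφx i))
      fun i => (Real.le_norm_self _).trans ((norm_le_pi_norm x i).trans hxX)]
  calc N.Lagr (fun r => N.lam r x) ξ ≤ ∑ r, (N.lam r x + q r * (log (q r) - log (N.lam r x))) :=
        N.Lagr_le (fun r => N.lam_pos r hφ hφx) (fun r => (hq r).1) hrep
    _ ≤ _ := Finset.sum_le_sum fun r _ => hterm r
    _ = _ := by rw [Finset.sum_add_distrib, Finset.mul_sum, Finset.sum_mul]

/-- Off the positive orthant the supremum defining `Lagr` may be unbounded, and `⨆` then takes the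
junk value `0`; cutting it off there keeps lower semicontinuity, since `Lagr ≥ 0`. -/
theorem lowerSemicontinuous_indicator_Lagr (hcone : N.PositivelySpans) :
    LowerSemicontinuous ({p : (Fin m → ℝ) × (Fin d → ℝ) | ∀ r, 0 < p.1 r}.indicator
      fun p => N.Lagr p.1 p.2) := by
  set U := {p : (Fin m → ℝ) × (Fin d → ℝ) | ∀ r, 0 < p.1 r}
  intro p c hc
  by_cases hp : p ∈ U
  · rw [indicator_of_mem hp] at hc
    obtain ⟨q, hq, hrep⟩ := hcone p.2
    obtain ⟨θ, hθ⟩ := (lt_ciSup_iff (N.bddAbove_lagrObjective hp hq hrep)).1 hc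
    have hcont : Continuous fun p : (Fin m → ℝ) × (Fin d → ℝ) => N.lagrObjective p.1 p.2 θ := by
      unfold lagrObjective
      fun_prop
    have hopen : IsOpen U := by
      simp only [U, ofPred_forall]
      exact isOpen_iInter_of_finite fun r => isOpen_lt continuous_const (by fun_prop)
    filter_upwards [hopen.mem_nhds hp, (isOpen_lt continuous_const hcont).mem_nhds hθ]
      with p' hp' hθ'
    obtain ⟨q', hq', hrep'⟩ := hcone p'.2
    rw [indicator_of_mem hp']
    exact hθ'.trans_le (le_ciSup (N.bddAbove_lagrObjective hp' hq' hrep') θ)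
  · rw [indicator_of_notMem hp] at hc
    exact Eventually.of_forall fun p' =>
      hc.trans_le (indicator_nonneg (fun p' _ => N.Lagr_nonneg _ _) p')

theorem intervalIntegrable_Lagr_and_integral_le (hcone : N.PositivelySpans) {A B X c t : ℝ}
    (hB : 0 ≤ B) (hAB : ∀ (x ξ : Fin d → ℝ) (φ : ℝ), 0 < φ → (∀ i, φ ≤ x i) → ‖x‖ ≤ X →
      ∑ i, |ξ i| ≤ 1 → N.Lagr (fun r => N.lam r x) ξ ≤ A + B * |log φ|)
    (hc : 0 < c) (ht : 0 ≤ t) {z g : ℝ → Fin d → ℝ} (hz : Continuous z) (hg : Measurable g)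
    (hg1 : ∀ s, ∑ i, |g s i| ≤ 1) (hzX : ∀ s ∈ Ioo 0 t, ‖z s‖ ≤ X)
    (hzφ : ∀ s ∈ Ioo 0 t, ∀ i, c * min s (t - s) ≤ z s i) :
    IntervalIntegrable (fun s => N.Lagr (fun r => N.lam r (z s)) (g s)) volume 0 t ∧
      ∫ s in (0:ℝ)..t, N.Lagr (fun r => N.lam r (z s)) (g s) ≤ logCost A B c t := by
  have hφ : ∀ s ∈ Ioo 0 t, 0 < c * min s (t - s) := fun s hs =>
    mul_pos hc (lt_min hs.1 (sub_pos.2 hs.2))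
  refine intervalIntegrable_and_integral_le_logCost ht hB ?_ (fun s _ => N.Lagr_nonneg _ _)
    fun s hs => hAB _ _ _ (hφ s hs) (hzφ s hs) (hzX s hs) (hg1 s)
  have hmeas := (N.lowerSemicontinuous_indicator_Lagr hcone).measurable.comp
    ((measurable_pi_lambda _ fun r => ((N.continuous_lam r).comp hz).measurable).prodMk hg)
  refine hmeas.aestronglyMeasurable.congr
    ((ae_restrict_iff' measurableSet_Ioo).2 (Eventually.of_forall fun s hs => ?_))
  exact indicator_of_mem (s := {p : (Fin m → ℝ) × (Fin d → ℝ) | ∀ r, 0 < p.1 r})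
    (fun r => N.lam_pos r (hφ s hs) (hzφ s hs)) _

end CRN

theorem norm_le_sum_abs {d : ℕ} (x : Fin d → ℝ) : ‖x‖ ≤ ∑ i, |x i| :=
  (pi_norm_le_iff_of_nonneg (Finset.sum_nonneg fun i _ => abs_nonneg (x i))).2 fun i =>
    (Real.norm_eq_abs _).trans_le
      (Finset.single_le_sum (fun i _ => abs_nonneg (x i)) (Finset.mem_univ i))

section Clearance

variable {d : ℕ} {D : Set (Fin d → ℝ)} {w : Fin d → ℝ} {ρ : ℝ}

theorem mem_of_norm_sub_lt (hw : ∀ y ∉ D, ρ ≤ ‖w - y‖) {z : Fin d → ℝ} (hz : ‖w - z‖ < ρ) :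
    z ∈ D :=
  by_contra fun h => (hw z h).not_gt hz

theorem le_apply_of_forall_notMem (hDpos : ∀ x ∈ D, ∀ i, 0 ≤ x i) (hwD : w ∈ D)
    (hw : ∀ y ∉ D, ρ ≤ ‖w - y‖) (i : Fin d) : ρ ≤ w i := by
  by_contra! h
  have hwi := hDpos w hwD i
  -- pushing coordinate `i` below zero leaves `D` at distance `(w i + ρ) / 2 < ρ`
  set y := Function.update w i ((w i - ρ) / 2)
  have hy : y ∉ D := fun hy => by
    have := hDpos y hy i
    simp only [y, Function.update_self] at this
    linarith
  have hwy : w - y = Pi.single i ((w i + ρ) / 2) := by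
    ext l
    rcases eq_or_ne l i with rfl | hl
    · simp [y]
      ring
    · simp [y, hl]
  have := hw y hy
  rw [hwy, Pi.norm_single, Real.norm_of_nonneg (by linarith)] at this
  linarith

theorem sub_norm_sub_le_apply (hDpos : ∀ x ∈ D, ∀ i, 0 ≤ x i) (hwD : w ∈ D)
    (hw : ∀ y ∉ D, ρ ≤ ‖w - y‖) (z : Fin d → ℝ) (i : Fin d) : ρ - ‖w - z‖ ≤ z i := by
  have h := norm_le_pi_norm (w - z) i
  rw [Real.norm_eq_abs, Pi.sub_apply] at h
  linarith [le_abs_self (w i - z i), le_apply_of_forall_notMem hDpos hwD hw i]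

end Clearance

theorem eqOn_ite_le_uIoc {E : Type*} (v : E) (f : ℝ → E) {a s : ℝ} (has : a ≤ s) :
    EqOn (fun u => if u ≤ a then v else f u) f (uIoc a s) := fun _ hu =>
  if_neg (uIoc_of_le has ▸ hu).1.not_ge

section IteIntegral

variable {E : Type*} [NormedAddCommGroup E] (v : E) (f : ℝ → E) {a c s : ℝ}

theorem intervalIntegrable_ite_le (hca : c ≤ a) (has : a ≤ s)
    (hf : IntervalIntegrable f volume a s) :
    IntervalIntegrable (fun u => if u ≤ a then v else f u) volume c s :=
  (intervalIntegrable_const.congr fun _ hu => (if_pos (uIoc_of_le hca ▸ hu).2).symm).trans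
    (hf.congr (eqOn_ite_le_uIoc v f has).symm)

variable [NormedSpace ℝ E] [CompleteSpace E]

theorem integral_ite_le_of_le (hcs : c ≤ s) (hsa : s ≤ a) :
    ∫ u in c..s, (if u ≤ a then v else f u) = (s - c) • v := by
  rw [intervalIntegral.integral_congr (g := fun _ => v)
    fun u hu => if_pos ((uIcc_of_le hcs ▸ hu).2.trans hsa), intervalIntegral.integral_const]

theorem integral_ite_le (hca : c ≤ a) (has : a ≤ s) (hf : IntervalIntegrable f volume a s) :
    ∫ u in c..s, (if u ≤ a then v else f u) = (a - c) • v + ∫ u in a..s, f u := by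
  have hint := intervalIntegrable_ite_le v f hca has hf
  have hamem : a ∈ uIcc c s := mem_uIcc_of_le hca has
  rw [← intervalIntegral.integral_add_adjacent_intervals
      (hint.mono_set (uIcc_subset_uIcc left_mem_uIcc hamem))
      (hint.mono_set (uIcc_subset_uIcc hamem right_mem_uIcc)),
    integral_ite_le_of_le v f hca le_rfl,
    intervalIntegral.integral_congr_ae
      (Eventually.of_forall fun u hu => eqOn_ite_le_uIoc v f has hu)]

end IteIntegral

section Detour

variable {d : ℕ} (v w : Fin d → ℝ) {a δ s : ℝ}

def detour (a δ s : ℝ) : Fin d → ℝ := if s ≤ a then v else if s ≤ a + δ then w else -v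

theorem measurable_detour : Measurable (detour v w a δ) :=
  Measurable.ite measurableSet_Iic measurable_const
    (Measurable.ite measurableSet_Iic measurable_const measurable_const)

theorem sum_abs_detour_le (hv : ∑ i, |v i| ≤ 1) (hw : ∑ i, |w i| ≤ 1) (s : ℝ) :
    ∑ i, |detour v w a δ s i| ≤ 1 := by
  unfold detour
  split_ifs <;> simpa

theorem intervalIntegrable_detour (hv : ∑ i, |v i| ≤ 1) (hw : ∑ i, |w i| ≤ 1) (p q : ℝ) :
    IntervalIntegrable (detour v w a δ) volume p q :=
  (intervalIntegrable_const (c := (1 : ℝ))).mono_fun (measurable_detour v w).aestronglyMeasurable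
    (Eventually.of_forall fun s => (norm_le_sum_abs _).trans
      ((sum_abs_detour_le v w hv hw s).trans (le_abs_self 1)))

def unitDirection (x y : Fin d → ℝ) : Fin d → ℝ := (∑ i, |x i - y i|)⁻¹ • (y - x)

theorem norm_sub_le_sum_abs (x y : Fin d → ℝ) : ‖y - x‖ ≤ ∑ i, |x i - y i| := by
  simpa [abs_sub_comm] using norm_le_sum_abs (y - x)

theorem sum_abs_smul_unitDirection (x y : Fin d → ℝ) :
    (∑ i, |x i - y i|) • unitDirection x y = y - x := by
  rcases eq_or_ne (∑ i, |x i - y i|) 0 with h | h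
  · rw [h, zero_smul, eq_comm, ← norm_le_zero_iff, ← h]
    exact norm_sub_le_sum_abs x y
  · rw [unitDirection, smul_smul, mul_inv_cancel₀ h, one_smul]

theorem sum_abs_unitDirection_le (x y : Fin d → ℝ) : ∑ i, |unitDirection x y i| ≤ 1 := by
  simp only [unitDirection, Pi.smul_apply, smul_eq_mul, abs_mul, ← Finset.mul_sum, abs_inv,
    abs_of_nonneg (Finset.sum_nonneg fun i _ => abs_nonneg (x i - y i))]
  simpa [abs_sub_comm] using inv_mul_le_one (a := ∑ i, |x i - y i|)

theorem integral_detour_of_le (hs : 0 ≤ s) (hsa : s ≤ a) :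
    ∫ u in (0:ℝ)..s, detour v w a δ u = s • v := by
  simpa [detour] using integral_ite_le_of_le v _ hs hsa

theorem integral_detour_of_le_add (ha : 0 ≤ a) (has : a ≤ s) (hsδ : s ≤ a + δ) :
    ∫ u in (0:ℝ)..s, detour v w a δ u = a • v + (s - a) • w := by
  unfold detour
  have hinner : IntervalIntegrable (fun u => if u ≤ a + δ then w else -v) volume a s :=
    intervalIntegrable_const.congr fun _ hu => (if_pos ((uIoc_of_le has ▸ hu).2.trans hsδ)).symm
  rw [integral_ite_le v _ ha has hinner, integral_ite_le_of_le w _ has hsδ, sub_zero]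

theorem integral_detour_of_add_le (ha : 0 ≤ a) (hδ : 0 ≤ δ) (hs : a + δ ≤ s) :
    ∫ u in (0:ℝ)..s, detour v w a δ u = a • v + δ • w - (s - (a + δ)) • v := by
  unfold detour
  have hinner := intervalIntegrable_ite_le w (fun _ => -v) (le_add_of_nonneg_right hδ) hs
    intervalIntegrable_const
  rw [integral_ite_le v _ ha (by linarith) hinner,
    integral_ite_le w _ (le_add_of_nonneg_right hδ) hs
    intervalIntegrable_const, intervalIntegral.integral_const]
  simp only [sub_zero, add_sub_cancel_left, smul_neg]
  abel

end Detour

section DetourPath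

variable {d : ℕ} {D B : Set (Fin d → ℝ)} {β ε : ℝ} {v : Fin d → ℝ}

theorem add_mul_mem_and_le (hDpos : ∀ x ∈ D, ∀ i, 0 ≤ x i) (hβ : 0 < β)
    (hsep : ∀ p ∈ D ∩ B, ∀ s : ℝ, 0 ≤ s → s ≤ ε / β →
      ∀ y ∉ D, β * s ≤ ‖(fun i => p i + s * v i) - y‖)
    {p : Fin d → ℝ} (hp : p ∈ D ∩ B) {s : ℝ} (hs : 0 ≤ s) (hsε : s ≤ ε / β) :
    (fun i => p i + s * v i) ∈ D ∧ ∀ i, β * s ≤ p i + s * v i := by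
  have hclear := hsep p hp s hs hsε
  have hmem : (fun i => p i + s * v i) ∈ D := by
    rcases hs.eq_or_lt with rfl | hs
    · simpa using hp.1
    · exact mem_of_norm_sub_lt hclear (by simpa using mul_pos hβ hs)
  exact ⟨hmem, le_apply_of_forall_notMem hDpos hmem hclear⟩

theorem mem_and_le_of_norm_sub_le (hDpos : ∀ x ∈ D, ∀ i, 0 ≤ x i) (hβ : 0 < β)
    (hsep : ∀ p ∈ D ∩ B, ∀ s : ℝ, 0 ≤ s → s ≤ ε / β →
      ∀ y ∉ D, β * s ≤ ‖(fun i => p i + s * v i) - y‖)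
    {x : Fin d → ℝ} (hx : x ∈ D ∩ B) {a δ : ℝ} (ha : β * a = 2 * δ) (hδ : 0 < δ)
    (haε : a ≤ ε / β) {z : Fin d → ℝ} (hz : ‖(fun i => x i + a * v i) - z‖ ≤ δ) :
    z ∈ D ∧ ∀ i, δ ≤ z i := by
  have ha0 : 0 ≤ a := by nlinarith
  have hclear := hsep x hx a ha0 haε
  refine ⟨mem_of_norm_sub_lt hclear (by linarith), fun i => ?_⟩
  linarith [sub_norm_sub_le_apply hDpos (add_mul_mem_and_le hDpos hβ hsep hx ha0 haε).1 hclear z i]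

theorem detour_mem_and_le (hDpos : ∀ x ∈ D, ∀ i, 0 ≤ x i) (hβ : 0 < β)
    (hsep : ∀ p ∈ D ∩ B, ∀ s : ℝ, 0 ≤ s → s ≤ ε / β →
      ∀ y ∉ D, β * s ≤ ‖(fun i => p i + s * v i) - y‖)
    {x y w : Fin d → ℝ} (hx : x ∈ D ∩ B) (hy : y ∈ D ∩ B) {a δ : ℝ} (hyx : ‖y - x‖ ≤ δ)
    (hw : δ • w = y - x) (ha : β * a = 2 * δ) (haε : a ≤ ε / β) {s : ℝ}
    (hs : s ∈ Icc 0 (2 * a + δ)) :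
    x + ∫ u in (0:ℝ)..s, detour v w a δ u ∈ D ∧
      ∀ i, min (β * s) (min δ (β * (2 * a + δ - s)))
        ≤ (x + ∫ u in (0:ℝ)..s, detour v w a δ u) i := by
  have hδ0 : 0 ≤ δ := (norm_nonneg _).trans hyx
  have ha0 : 0 ≤ a := by nlinarith
  rcases le_or_gt s a with h1 | h1
  · obtain ⟨hmem, hle⟩ := add_mul_mem_and_le hDpos hβ hsep hx hs.1 (h1.trans haε)
    have hz : x + ∫ u in (0:ℝ)..s, detour v w a δ u = fun i => x i + s * v i := by
      rw [integral_detour_of_le v w hs.1 h1]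
      ext i
      simp
    rw [hz]
    exact ⟨hmem, fun i => (min_le_left _ _).trans (hle i)⟩
  rcases le_or_gt s (a + δ) with h2 | h2
  · set p : Fin d → ℝ := fun i => x i + a * v i
    have hz : x + ∫ u in (0:ℝ)..s, detour v w a δ u = p + (s - a) • w := by
      rw [integral_detour_of_le_add v w ha0 h1.le h2]
      ext i
      simp [p]
      ring
    have hnorm : ‖p - (p + (s - a) • w)‖ ≤ δ := by
      rw [sub_add_cancel_left, norm_neg, norm_smul, Real.norm_of_nonneg (by linarith)]
      calc (s - a) * ‖w‖ ≤ δ * ‖w‖ := mul_le_mul_of_nonneg_right (by linarith) (norm_nonneg _)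
        _ = ‖y - x‖ := by rw [← hw, norm_smul, Real.norm_of_nonneg hδ0]
        _ ≤ δ := hyx
    obtain ⟨hmem, hle⟩ := mem_and_le_of_norm_sub_le hDpos hβ hsep hx ha (by linarith) haε hnorm
    rw [hz]
    exact ⟨hmem, fun i => (min_le_right _ _).trans ((min_le_left _ _).trans (hle i))⟩
  · obtain ⟨hmem, hle⟩ := add_mul_mem_and_le hDpos hβ hsep hy (sub_nonneg.2 hs.2)
      ((show 2 * a + δ - s ≤ a by linarith).trans haε)
    have hz : x + ∫ u in (0:ℝ)..s, detour v w a δ u = fun i => y i + (2 * a + δ - s) * v i := by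
      rw [integral_detour_of_add_le v w ha0 hδ0 h2.le, hw]
      ext i
      simp
      ring
    rw [hz]
    exact ⟨hmem, fun i => (min_le_right _ _).trans ((min_le_right _ _).trans (hle i))⟩

theorem detour_endpoint {x y w : Fin d → ℝ} {a δ : ℝ} (ha : 0 ≤ a) (hδ : 0 ≤ δ)
    (hw : δ • w = y - x) : x + ∫ u in (0:ℝ)..(2 * a + δ), detour v w a δ u = y := by
  rw [integral_detour_of_add_le v w ha hδ (by linarith), hw]
  ext i
  simp
  ring

theorem mul_min_sub_le_min {β δ c t s : ℝ} (hcβ : c ≤ β) (hct : c * t ≤ 2 * δ) (hc : 0 ≤ c)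
    (hs : s ∈ Icc 0 t) : c * min s (t - s) ≤ min (β * s) (min δ (β * (t - s))) := by
  have hmin : 2 * min s (t - s) ≤ t := by
    rcases min_choice s (t - s) with h | h <;> rw [h] <;>
      linarith [min_le_left s (t - s), min_le_right s (t - s)]
  refine le_min ?_ (le_min ?_ ?_)
  · exact (mul_le_mul_of_nonneg_left (min_le_left _ _) hc).trans
      (mul_le_mul_of_nonneg_right hcβ hs.1)
  · nlinarith [mul_le_mul_of_nonneg_left hmin hc]
  · exact (mul_le_mul_of_nonneg_left (min_le_right _ _) hc).trans
      (mul_le_mul_of_nonneg_right hcβ (sub_nonneg.2 hs.2))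

theorem detour_spec (hDpos : ∀ x ∈ D, ∀ i, 0 ≤ x i) (hβ : 0 < β)
    (hsep : ∀ p ∈ D ∩ B, ∀ s : ℝ, 0 ≤ s → s ≤ ε / β →
      ∀ y ∉ D, β * s ≤ ‖(fun i => p i + s * v i) - y‖)
    {x y : Fin d → ℝ} (hx : x ∈ D ∩ B) (hy : y ∈ D ∩ B) (hxy : 2 * ∑ i, |x i - y i| ≤ ε) :
    let δ := ∑ i, |x i - y i|
    let z := fun s => x + ∫ u in (0:ℝ)..s, detour v (unitDirection x y) (2 * δ / β) δ u
    (∀ s ∈ Icc 0 ((4 / β + 1) * δ), z s ∈ D) ∧ z ((4 / β + 1) * δ) = y ∧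
      ∀ s ∈ Ioo 0 ((4 / β + 1) * δ), ∀ i, (4 / β + 1)⁻¹ * min s ((4 / β + 1) * δ - s) ≤ z s i := by
  intro δ z
  set a := 2 * δ / β
  have hδ0 : 0 ≤ δ := Finset.sum_nonneg fun i _ => abs_nonneg _
  have ha : β * a = 2 * δ := by
    simp only [a]
    field_simp
  have hκ : (4 / β + 1) * δ = 2 * a + δ := by
    simp only [a]
    field_simp
    ring
  have hκβ : (4 / β + 1)⁻¹ ≤ β :=
    inv_le_of_inv_le₀ hβ (by rw [div_eq_mul_inv]; linarith [inv_pos.2 hβ])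
  have hpath := fun s (hs : s ∈ Icc 0 (2 * a + δ)) => detour_mem_and_le hDpos hβ hsep hx hy
    (norm_sub_le_sum_abs x y) (sum_abs_smul_unitDirection x y) ha
    (div_le_div_of_nonneg_right hxy hβ.le) hs
  rw [hκ]
  refine ⟨fun s hs => (hpath s hs).1, detour_endpoint (by positivity) hδ0
    (sum_abs_smul_unitDirection x y), fun s hs i => ?_⟩
  refine (mul_min_sub_le_min hκβ ?_ (by positivity) (Ioo_subset_Icc_self hs)).trans
    ((hpath s (Ioo_subset_Icc_self hs)).2 i)
  rw [← hκ, ← mul_assoc, inv_mul_cancel₀ (by positivity), one_mul]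
  linarith

end DetourPath

theorem stmt17_general {d m : ℕ} (N : CRN d m)
    (D : Set (Fin d → ℝ)) (hD : IsCompact D) (hDpos : ∀ x ∈ D, ∀ i, 0 ≤ x i)
    (β ε : ℝ) (hβ0 : 0 < β) (hε0 : 0 < ε)
    (n : ℕ) (cent : Fin n → Fin d → ℝ) (rad : Fin n → ℝ)
    (hcover : D ⊆ ⋃ j, Metric.ball (cent j) (rad j))
    (vv : Fin n → Fin d → ℝ) (hvv : ∀ j, (∑ i, |vv j i|) ≤ 1)
    (hsep : ∀ j, ∀ x ∈ D ∩ Metric.ball (cent j) (rad j + ε), ∀ s : ℝ, 0 ≤ s → s ≤ ε / β →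
      ∀ y ∉ D, β * s ≤ ‖(fun i => x i + s * vv j i) - y‖)
    (hcone : ∀ ξ : Fin d → ℝ, ∃ q : Fin m → ℝ, (∀ r, 0 ≤ q r) ∧
      ∀ i, ∑ r, q r * N.cvec r i = ξ i) :
    ∃ κ : ℝ, 1 ≤ κ ∧ ∃ ε₀ > (0:ℝ), ∃ C : ℝ → ℝ,
      Tendsto C (nhdsWithin 0 (Set.Ioi 0)) (nhds 0) ∧
      ∀ x ∈ D, ∀ y ∈ D, (∑ i, |x i - y i|) < ε₀ →
        ∃ g : ℝ → Fin d → ℝ,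
          IntervalIntegrable g volume 0 (κ * ∑ i, |x i - y i|) ∧
          (∀ s ∈ Set.Icc (0:ℝ) (κ * ∑ i, |x i - y i|),
            (fun i' => x i' + (∫ u in (0:ℝ)..s, g u) i') ∈ D) ∧
          (fun i' => x i' + (∫ u in (0:ℝ)..(κ * ∑ i, |x i - y i|), g u) i') = y ∧
          IntervalIntegrable (fun s =>
              N.Lagr (fun r => N.lam r (fun i' => x i' + (∫ u in (0:ℝ)..s, g u) i')) (g s))
            volume 0 (κ * ∑ i, |x i - y i|) ∧
          (∫ s in (0:ℝ)..(κ * ∑ i, |x i - y i|),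
              N.Lagr (fun r => N.lam r (fun i' => x i' + (∫ u in (0:ℝ)..s, g u) i')) (g s))
            ≤ C (κ * ∑ i, |x i - y i|) := by
  obtain ⟨X, hX⟩ := hD.isBounded.exists_norm_le
  obtain ⟨A, B, hB, hAB⟩ := N.exists_Lagr_lam_le_abs_log hcone X
  have hκ : 0 < 4 / β + 1 := by positivity
  refine ⟨4 / β + 1, by linarith [div_pos four_pos hβ0], ε / 2, by positivity,
    logCost A B (4 / β + 1)⁻¹, tendsto_logCost A B _, fun x hx y hy hxy => ?_⟩
  obtain ⟨j, hj⟩ := mem_iUnion.1 (hcover hx)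
  have hyj : y ∈ Metric.ball (cent j) (rad j + ε) := by
    rw [Metric.mem_ball] at hj ⊢
    linarith [dist_triangle y x (cent j), (dist_eq_norm y x).trans_le (norm_sub_le_sum_abs x y)]
  obtain ⟨hmem, hend, hlow⟩ := detour_spec hDpos hβ0 (hsep j)
    ⟨hx, Metric.ball_subset_ball (by linarith) hj⟩ ⟨hy, hyj⟩ (by linarith)
  set δ := ∑ i, |x i - y i|
  have hgint := intervalIntegrable_detour (a := 2 * δ / β) (δ := δ) (vv j) _ (hvv j)
    (sum_abs_unitDirection_le x y)
  obtain ⟨hint, hle⟩ := N.intervalIntegrable_Lagr_and_integral_le hcone hB hAB (inv_pos.2 hκ)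
    (by positivity) (continuous_const.add (intervalIntegral.continuous_primitive hgint 0))
    (measurable_detour _ _) (sum_abs_detour_le _ _ (hvv j) (sum_abs_unitDirection_le x y))
    (fun s hs => hX _ (hmem s (Ioo_subset_Icc_self hs))) hlow
  exact ⟨_, hgint 0 _, hmem, hend, hint, hle⟩

theorem stmt17 {d m : ℕ} (N : CRN d m)
    (D : Set (Fin d → ℝ)) (hD : IsCompact D) (hDpos : ∀ x ∈ D, ∀ i, 0 ≤ x i)
    (β ε : ℝ) (hβ0 : 0 < β) (hβ1 : β < 1) (hε0 : 0 < ε) (hε3 : ε < 1/3)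
    (n : ℕ) (cent : Fin n → Fin d → ℝ) (rad : Fin n → ℝ)
    (hcover : D ⊆ ⋃ j, Metric.ball (cent j) (rad j))
    (vv : Fin n → Fin d → ℝ) (hvv : ∀ j, (∑ i, |vv j i|) ≤ 1)
    (hsep : ∀ j, ∀ x ∈ D ∩ Metric.ball (cent j) (rad j + ε), ∀ s : ℝ, 0 ≤ s → s ≤ ε / β →
      ∀ y ∉ D, β * s ≤ ‖(fun i => x i + s * vv j i) - y‖)
    (hcone : ∀ ξ : Fin d → ℝ, ∃ q : Fin m → ℝ, (∀ r, 0 ≤ q r) ∧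
      ∀ i, ∑ r, q r * N.cvec r i = ξ i) :
    ∃ κ : ℝ, 1 ≤ κ ∧ ∃ ε₀ > (0:ℝ), ∃ C : ℝ → ℝ,
      Tendsto C (nhdsWithin 0 (Set.Ioi 0)) (nhds 0) ∧
      ∀ x ∈ D, ∀ y ∈ D, (∑ i, |x i - y i|) < ε₀ →
        ∃ g : ℝ → Fin d → ℝ,
          IntervalIntegrable g volume 0 (κ * ∑ i, |x i - y i|) ∧
          (∀ s ∈ Set.Icc (0:ℝ) (κ * ∑ i, |x i - y i|),
            (fun i' => x i' + (∫ u in (0:ℝ)..s, g u) i') ∈ D) ∧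
          (fun i' => x i' + (∫ u in (0:ℝ)..(κ * ∑ i, |x i - y i|), g u) i') = y ∧
          IntervalIntegrable (fun s =>
              N.Lagr (fun r => N.lam r (fun i' => x i' + (∫ u in (0:ℝ)..s, g u) i')) (g s))
            volume 0 (κ * ∑ i, |x i - y i|) ∧
          (∫ s in (0:ℝ)..(κ * ∑ i, |x i - y i|),
              N.Lagr (fun r => N.lam r (fun i' => x i' + (∫ u in (0:ℝ)..s, g u) i')) (g s))
            ≤ C (κ * ∑ i, |x i - y i|) :=
  stmt17_general N D hD hDpos β ε hβ0 hε0 n cent rad hcover vv hvv hsep hcone
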